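/- Every vector v in K^7 satisfying PhiR * v = v has its fourth, fifth, sixth and seventh coordinates equal to zero; that is, the fixed space of PhiR is contained in the span of the first three standard basis vectors. -/

import Mathlib

open Matrix

/-- The image of the order-3 generator `R` of the modular group under the paper's family of
representations into `G₂`. -/
def PhiR {K : Type*} [Field K] (w x y z : K) : Matrix (Fin 7) (Fin 7) K :=
  !![1, 0, 0, 0, 0, 0, 0;
     0, 1, 0, 0, 0, 0, 0;
     0, 0, 1, 0, 0, 0, 0;
     0, 0, 0, -(1/2), -(3/2)*(w^2 + 3*x^2 - y^2 - 3*z^2), -3*(x*y + w*z), 3*(w*y - 3*x*z);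
     0, 0, 0, (1/2)*(w^2 + 3*x^2 - y^2 - 3*z^2), -(1/2), w*y - 3*x*z, 3*(x*y + w*z);
     0, 0, 0, 3*(x*y + w*z), -3*(w*y - 3*x*z), -(1/2), -(3/2)*(w^2 + 3*x^2 - y^2 - 3*z^2);
     0, 0, 0, -(w*y - 3*x*z), -3*(x*y + w*z), (1/2)*(w^2 + 3*x^2 - y^2 - 3*z^2), -(1/2)]

private lemma cv75 {K : Type*} (a : K) (u : Fin 6 -> K) : (Matrix.vecCons a u : Fin 7 -> K) 5 = u 4 := rfl
private lemma cv76 {K : Type*} (a : K) (u : Fin 6 -> K) : (Matrix.vecCons a u : Fin 7 -> K) 6 = u 5 := rfl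
private lemma cv65 {K : Type*} (a : K) (u : Fin 5 -> K) : (Matrix.vecCons a u : Fin 6 -> K) 5 = u 4 := rfl

set_option maxHeartbeats 2000000 in
/-- Every fixed vector of `PhiR` has its last four coordinates zero, i.e. the fixed space of
`PhiR` is contained in the span of the first three standard basis vectors. -/
theorem stmt5 {K : Type*} [Field K] (hchar2 : (2 : K) ≠ 0) (hchar3 : (3 : K) ≠ 0)
    (w x y z : K) (hC2 : w^2 + 3*x^2 + y^2 + 3*z^2 = 1) :
    ∀ v : Fin 7 → K, (PhiR w x y z).mulVec v = v →
      v 3 = 0 ∧ v 4 = 0 ∧ v 5 = 0 ∧ v 6 = 0 := by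
  intro v hv
  have e3 := congrFun hv 3
  have e4 := congrFun hv 4
  have e5 := congrFun hv 5
  have e6 := congrFun hv 6
  simp [PhiR, mulVec, dotProduct, Fin.sum_univ_seven, cv75, cv76, cv65] at e3 e4 e5 e6
  field_simp at e3 e4 e5 e6
  have F0 : -6*(v 3) - 6*(w^2 + 3*x^2 - y^2 - 3*z^2)*(v 4) - 12*(x*y + w*z)*(v 5) + 12*(w*y - 3*x*z)*(v 6) = 0 := by
    linear_combination 2*e3
  have F1 : 2*(w^2 + 3*x^2 - y^2 - 3*z^2)*(v 3) - 6*(v 4) + 4*(w*y - 3*x*z)*(v 5) + 12*(x*y + w*z)*(v 6) = 0 := by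
    linear_combination 2*e4
  have F2 : 12*(x*y + w*z)*(v 3) - 12*(w*y - 3*x*z)*(v 4) - 6*(v 5) - 6*(w^2 + 3*x^2 - y^2 - 3*z^2)*(v 6) = 0 := by
    linear_combination 2*e5
  have F3 : -4*(w*y - 3*x*z)*(v 3) - 12*(x*y + w*z)*(v 4) + 2*(w^2 + 3*x^2 - y^2 - 3*z^2)*(v 5) - 6*(v 6) = 0 := by
    linear_combination 2*e6
  have h2304 : (2304 : K) ≠ 0 := by
    have : (2304 : K) = 2^8 * 3^2 := by norm_num
    rw [this]
    exact mul_ne_zero (pow_ne_zero _ hchar2) (pow_ne_zero _ hchar3)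
  have h0 : (2304:K) * v 3 = 0 := by
    linear_combination ((-216) + (-648)*z^4 + (-432)*y^2*z^2 + (-72)*y^4 + (-1296)*x^2*z^2 + (-432)*x^2*y^2 + (-648)*x^4 + (-432)*w^2*z^2 + (-144)*w^2*y^2 + (-432)*w^2*x^2 + (-72)*w^4)*F0 + ((-648)*z^2 + (-1944)*z^6 + (-216)*y^2 + (-1944)*y^2*z^4 + (-648)*y^4*z^2 + (-72)*y^6 + 648*x^2 + (-1944)*x^2*z^4 + (-1296)*x^2*y^2*z^2 + (-216)*x^2*y^4 + 1944*x^4*z^2 + 648*x^4*y^2 + 1944*x^6 + 216*w^2 + (-648)*w^2*z^4 + (-432)*w^2*y^2*z^2 + (-72)*w^2*y^4 + 1296*w^2*x^2*z^2 + 432*w^2*x^2*y^2 + 1944*w^2*x^4 + 216*w^4*z^2 + 72*w^4*y^2 + 648*w^4*x^2 + 72*w^6)*F1 + (432*x*y + 1296*x*y*z^4 + 864*x*y^3*z^2 + 144*x*y^5 + 2592*x^3*y*z^2 + 864*x^3*y^3 + 1296*x^5*y + 432*w*z + 1296*w*z^5 + 864*w*y^2*z^3 + 144*w*y^4*z + 2592*w*x^2*z^3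 + 864*w*x^2*y^2*z + 1296*w*x^4*z + 864*w^2*x*y*z^2 + 288*w^2*x*y^3 + 864*w^2*x^3*y + 864*w^3*z^3 + 288*w^3*y^2*z + 864*w^3*x^2*z + 144*w^4*x*y + 144*w^5*z)*F2 + (1296*x*z + 3888*x*z^5 + 2592*x*y^2*z^3 + 432*x*y^4*z + 7776*x^3*z^3 + 2592*x^3*y^2*z + 3888*x^5*z + (-432)*w*y + (-1296)*w*y*z^4 + (-864)*w*y^3*z^2 + (-144)*w*y^5 + (-2592)*w*x^2*y*z^2 + (-864)*w*x^2*y^3 + (-1296)*w*x^4*y + 2592*w^2*x*z^3 + 864*w^2*x*y^2*z + 2592*w^2*x^3*z + (-864)*w^3*y*z^2 + (-288)*w^3*y^3 + (-864)*w^3*x^2*y + 432*w^4*x*z + (-144)*w^5*y)*F3 + (-(v 3)*(144*(w^2 + 3*x^2 + y^2 + 3*z^2)^3 + 144*(w^2 + 3*x^2 + y^2 + 3*z^2)^2 + 1008*(w^2 + 3*x^2 + y^2 + 3*z^2) + 1008))*hC2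
  have h1 : (2304:K) * v 4 = 0 := by
    linear_combination (216*z^2 + 648*z^6 + 72*y^2 + 648*y^2*z^4 + 216*y^4*z^2 + 24*y^6 + (-216)*x^2 + 648*x^2*z^4 + 432*x^2*y^2*z^2 + 72*x^2*y^4 + (-648)*x^4*z^2 + (-216)*x^4*y^2 + (-648)*x^6 + (-72)*w^2 + 216*w^2*z^4 + 144*w^2*y^2*z^2 + 24*w^2*y^4 + (-432)*w^2*x^2*z^2 + (-144)*w^2*x^2*y^2 + (-648)*w^2*x^4 + (-72)*w^4*z^2 + (-24)*w^4*y^2 + (-216)*w^4*x^2 + (-24)*w^6)*F0 + ((-216) + (-648)*z^4 + (-432)*y^2*z^2 + (-72)*y^4 + (-1296)*x^2*z^2 + (-432)*x^2*y^2 + (-648)*x^4 + (-432)*w^2*z^2 + (-144)*w^2*y^2 + (-432)*w^2*x^2 + (-72)*w^4)*F1 + (432*x*z + 1296*x*z^5 + 864*x*y^2*z^3 + 144*x*y^4*z + 2592*x^3*z^3 + 864*x^3*y^2*z + 1296*x^5*z + (-144)*w*y + (-432)*w*y*z^4 + (-288)*w*y^3*z^2 + (-48)*w*y^5 + (-864)*w*x^2*y*z^2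 + (-288)*w*x^2*y^3 + (-432)*w*x^4*y + 864*w^2*x*z^3 + 288*w^2*x*y^2*z + 864*w^2*x^3*z + (-288)*w^3*y*z^2 + (-96)*w^3*y^3 + (-288)*w^3*x^2*y + 144*w^4*x*z + (-48)*w^5*y)*F2 + ((-432)*x*y + (-1296)*x*y*z^4 + (-864)*x*y^3*z^2 + (-144)*x*y^5 + (-2592)*x^3*y*z^2 + (-864)*x^3*y^3 + (-1296)*x^5*y + (-432)*w*z + (-1296)*w*z^5 + (-864)*w*y^2*z^3 + (-144)*w*y^4*z + (-2592)*w*x^2*z^3 + (-864)*w*x^2*y^2*z + (-1296)*w*x^4*z + (-864)*w^2*x*y*z^2 + (-288)*w^2*x*y^3 + (-864)*w^2*x^3*y + (-864)*w^3*z^3 + (-288)*w^3*y^2*z + (-864)*w^3*x^2*z + (-144)*w^4*x*y + (-144)*w^5*z)*F3 + (-(v 4)*(144*(w^2 + 3*x^2 + y^2 + 3*z^2)^3 + 144*(w^2 + 3*x^2 + y^2 + 3*z^2)^2 + 1008*(w^2 + 3*x^2 + y^2 + 3*z^2) + 1008))*hC2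
  have h2 : (2304:K) * v 5 = 0 := by
    linear_combination ((-432)*x*y + (-1296)*x*y*z^4 + (-864)*x*y^3*z^2 + (-144)*x*y^5 + (-2592)*x^3*y*z^2 + (-864)*x^3*y^3 + (-1296)*x^5*y + (-432)*w*z + (-1296)*w*z^5 + (-864)*w*y^2*z^3 + (-144)*w*y^4*z + (-2592)*w*x^2*z^3 + (-864)*w*x^2*y^2*z + (-1296)*w*x^4*z + (-864)*w^2*x*y*z^2 + (-288)*w^2*x*y^3 + (-864)*w^2*x^3*y + (-864)*w^3*z^3 + (-288)*w^3*y^2*z + (-864)*w^3*x^2*z + (-144)*w^4*x*y + (-144)*w^5*z)*F0 + ((-1296)*x*z + (-3888)*x*z^5 + (-2592)*x*y^2*z^3 + (-432)*x*y^4*z + (-7776)*x^3*z^3 + (-2592)*x^3*y^2*z + (-3888)*x^5*z + 432*w*y + 1296*w*y*z^4 + 864*w*y^3*z^2 + 144*w*y^5 + 2592*w*x^2*y*z^2 + 864*w*x^2*y^3 + 1296*w*x^4*y + (-2592)*w^2*x*z^3 + (-864)*w^2*x*y^2*z + (-2592)*w^2*x^3*z + 864*w^3*y*z^2 + 288*w^3*y^3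 + 864*w^3*x^2*y + (-432)*w^4*x*z + 144*w^5*y)*F1 + ((-216) + (-648)*z^4 + (-432)*y^2*z^2 + (-72)*y^4 + (-1296)*x^2*z^2 + (-432)*x^2*y^2 + (-648)*x^4 + (-432)*w^2*z^2 + (-144)*w^2*y^2 + (-432)*w^2*x^2 + (-72)*w^4)*F2 + ((-648)*z^2 + (-1944)*z^6 + (-216)*y^2 + (-1944)*y^2*z^4 + (-648)*y^4*z^2 + (-72)*y^6 + 648*x^2 + (-1944)*x^2*z^4 + (-1296)*x^2*y^2*z^2 + (-216)*x^2*y^4 + 1944*x^4*z^2 + 648*x^4*y^2 + 1944*x^6 + 216*w^2 + (-648)*w^2*z^4 + (-432)*w^2*y^2*z^2 + (-72)*w^2*y^4 + 1296*w^2*x^2*z^2 + 432*w^2*x^2*y^2 + 1944*w^2*x^4 + 216*w^4*z^2 + 72*w^4*y^2 + 648*w^4*x^2 + 72*w^6)*F3 + (-(v 5)*(144*(w^2 + 3*x^2 + y^2 + 3*z^2)^3 + 144*(w^2 + 3*x^2 + y^2 + 3*z^2)^2 + 1008*(w^2 + 3*x^2 + y^2 + 3*z^2) + 1008))*hC2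
  have h3 : (2304:K) * v 6 = 0 := by
    linear_combination ((-432)*x*z + (-1296)*x*z^5 + (-864)*x*y^2*z^3 + (-144)*x*y^4*z + (-2592)*x^3*z^3 + (-864)*x^3*y^2*z + (-1296)*x^5*z + 144*w*y + 432*w*y*z^4 + 288*w*y^3*z^2 + 48*w*y^5 + 864*w*x^2*y*z^2 + 288*w*x^2*y^3 + 432*w*x^4*y + (-864)*w^2*x*z^3 + (-288)*w^2*x*y^2*z + (-864)*w^2*x^3*z + 288*w^3*y*z^2 + 96*w^3*y^3 + 288*w^3*x^2*y + (-144)*w^4*x*z + 48*w^5*y)*F0 + (432*x*y + 1296*x*y*z^4 + 864*x*y^3*z^2 + 144*x*y^5 + 2592*x^3*y*z^2 + 864*x^3*y^3 + 1296*x^5*y + 432*w*z + 1296*w*z^5 + 864*w*y^2*z^3 + 144*w*y^4*z + 2592*w*x^2*z^3 + 864*w*x^2*y^2*z + 1296*w*x^4*z + 864*w^2*x*y*z^2 + 288*w^2*x*y^3 + 864*w^2*x^3*y + 864*w^3*z^3 + 288*w^3*y^2*z + 864*w^3*x^2*z + 144*w^4*x*y + 144*w^5*z)*F1 + (216*z^2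 + 648*z^6 + 72*y^2 + 648*y^2*z^4 + 216*y^4*z^2 + 24*y^6 + (-216)*x^2 + 648*x^2*z^4 + 432*x^2*y^2*z^2 + 72*x^2*y^4 + (-648)*x^4*z^2 + (-216)*x^4*y^2 + (-648)*x^6 + (-72)*w^2 + 216*w^2*z^4 + 144*w^2*y^2*z^2 + 24*w^2*y^4 + (-432)*w^2*x^2*z^2 + (-144)*w^2*x^2*y^2 + (-648)*w^2*x^4 + (-72)*w^4*z^2 + (-24)*w^4*y^2 + (-216)*w^4*x^2 + (-24)*w^6)*F2 + ((-216) + (-648)*z^4 + (-432)*y^2*z^2 + (-72)*y^4 + (-1296)*x^2*z^2 + (-432)*x^2*y^2 + (-648)*x^4 + (-432)*w^2*z^2 + (-144)*w^2*y^2 + (-432)*w^2*x^2 + (-72)*w^4)*F3 + (-(v 6)*(144*(w^2 + 3*x^2 + y^2 + 3*z^2)^3 + 144*(w^2 + 3*x^2 + y^2 + 3*z^2)^2 + 1008*(w^2 + 3*x^2 + y^2 + 3*z^2) + 1008))*hC2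
  exact ⟨(mul_eq_zero.mp h0).resolve_left h2304, (mul_eq_zero.mp h1).resolve_left h2304,
    (mul_eq_zero.mp h2).resolve_left h2304, (mul_eq_zero.mp h3).resolve_left h2304⟩
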